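/- If a subspace K of H is copyable along δ_e, then its orthogonal complement Kᗮ is also copyable along δ_e. Hence the copyable subspaces form an orthocomplemented sublattice of the lattice of subspaces of H. -/

import Mathlib

open scoped TensorProduct InnerProductSpace

/-- The orthogonal projection of `H` onto the subspace `K`, regarded as an endomorphism
`P_K : H →ₗ[ℂ] H`. -/
noncomputable def projL {H : Type*} [NormedAddCommGroup H] [InnerProductSpace ℂ H]
    [FiniteDimensional ℂ H] (K : Submodule ℂ H) : H →ₗ[ℂ] H :=
  K.subtype ∘ₗ K.orthogonalProjectionOnto.toLinearMap

/-- The classical structure `δ_e : H →ₗ[ℂ] H ⊗[ℂ] H` associated with an orthonormal basis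
`e`, determined by `δ_e x = ∑ i, ⟪e i, x⟫_ℂ • (e i ⊗ₜ e i)`. -/
noncomputable def delta {ι H : Type*} [Fintype ι] [NormedAddCommGroup H]
    [InnerProductSpace ℂ H] (e : ι → H) : H →ₗ[ℂ] H ⊗[ℂ] H :=
  ∑ i, (innerSL ℂ (e i)).toLinearMap.smulRight (e i ⊗ₜ[ℂ] e i)

/-- A subspace `K` of `H` is copyable along `δ_e` if `δ_e ∘ₗ P_K = (P_K ⊗ P_K) ∘ₗ δ_e`. -/
def Copyable {ι H : Type*} [Fintype ι] [NormedAddCommGroup H] [InnerProductSpace ℂ H]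
    [FiniteDimensional ℂ H] (e : ι → H) (K : Submodule ℂ H) : Prop :=
  delta e ∘ₗ projL K = TensorProduct.map (projL K) (projL K) ∘ₗ delta e

/-!
Copyability of `K` along `δ_e` says exactly that every basis vector `e j` lies in `K` or in `Kᗮ`,
a condition symmetric in `K` and `Kᗮ`. Indeed, pairing `δ_e (P e_j) = P e_j ⊗ P e_j` with
`e_j ⊗ e_j` shows that `c = ⟪e_j, P e_j⟫ = ‖P e_j‖²` satisfies `c² = c`, so `‖P e_j‖` is `0`
or `1 = ‖e_j‖`, and by Pythagoras `P e_j` is `0` or `e_j`.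
-/

section Delta

variable {ι H : Type*} [Fintype ι] [NormedAddCommGroup H] [InnerProductSpace ℂ H]

theorem delta_apply (e : ι → H) (x : H) :
    delta e x = ∑ i, ⟪e i, x⟫_ℂ • (e i ⊗ₜ[ℂ] e i) := by
  simp [delta, LinearMap.sum_apply]

theorem delta_apply_self {e : ι → H} (he : Orthonormal ℂ e) (j : ι) :
    delta e (e j) = e j ⊗ₜ[ℂ] e j := by
  classical
  simp [delta_apply, orthonormal_iff_ite.mp he]

theorem isIdempotentElem_inner_of_delta_eq_tmul {e : ι → H} (he : Orthonormal ℂ e) {v : H}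
    (hv : delta e v = v ⊗ₜ[ℂ] v) (j : ι) : IsIdempotentElem ⟪e j, v⟫_ℂ := by
  classical
  let pair : H ⊗[ℂ] H →ₗ[ℂ] ℂ :=
    TensorProduct.lift ((LinearMap.mul ℂ ℂ).compl₁₂ (innerₛₗ ℂ (e j)) (innerₛₗ ℂ (e j)))
  have := congrArg pair hv
  simpa [pair, delta_apply, orthonormal_iff_ite.mp he, IsIdempotentElem, eq_comm] using this

end Delta

namespace Submodule

variable {𝕜 E : Type*} [RCLike 𝕜] [NormedAddCommGroup E] [InnerProductSpace 𝕜 E]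
  (K : Submodule 𝕜 E) [K.HasOrthogonalProjection]

theorem mem_or_mem_orthogonal_of_norm_starProjection {x : E}
    (h : ‖K.starProjection x‖ ^ 2 = 0 ∨ ‖K.starProjection x‖ ^ 2 = ‖x‖ ^ 2) :
    x ∈ K ∨ x ∈ Kᗮ := by
  rcases h with h | h
  · right
    rw [← starProjection_apply_eq_zero_iff]
    simpa using h
  · left
    have hpyth := K.norm_sq_eq_add_norm_sq_starProjection x
    rw [← K.orthogonal_orthogonal, ← starProjection_apply_eq_zero_iff]
    have : ‖Kᗮ.starProjection x‖ ^ 2 = 0 := by linarith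
    simpa using this

end Submodule

section Copyable

variable {ι H : Type*} [Fintype ι] [NormedAddCommGroup H] [InnerProductSpace ℂ H]
  [FiniteDimensional ℂ H]

theorem projL_apply (K : Submodule ℂ H) (x : H) : projL K x = K.starProjection x :=
  rfl

theorem copyable_iff (e : OrthonormalBasis ι ℂ H) (K : Submodule ℂ H) :
    Copyable e K ↔ ∀ j, e j ∈ K ∨ e j ∈ Kᗮ := by
  have hδ := delta_apply_self e.orthonormal
  constructor
  · intro hK j
    have hcopy : delta e (K.starProjection (e j)) =
        K.starProjection (e j) ⊗ₜ[ℂ] K.starProjection (e j) := by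
      simpa [projL_apply, hδ] using LinearMap.congr_fun hK (e j)
    have hnorm :
        ‖K.starProjection (e j)‖ ^ 2 = RCLike.re ⟪e j, K.starProjection (e j)⟫_ℂ := by
      rw [← inner_re_symm, K.re_inner_starProjection_eq_normSq]; rfl
    apply K.mem_or_mem_orthogonal_of_norm_starProjection
    rw [hnorm, e.orthonormal.1 j]
    rcases IsIdempotentElem.iff_eq_zero_or_one.mp
      (isIdempotentElem_inner_of_delta_eq_tmul e.orthonormal hcopy j) with h | h <;> simp [h]
  · intro h
    refine e.toBasis.ext fun j => ?_
    rcases h j with hj | hj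
    · simp [projL_apply, hδ, K.starProjection_eq_self_iff.mpr hj]
    · simp [projL_apply, hδ, K.starProjection_apply_eq_zero_iff.mpr hj]

end Copyable

/-- If a subspace `K` of `H` is copyable along `δ_e`, then so is its orthogonal
complement `Kᗮ`. -/
theorem copyable_orthogonal
    {ι H : Type*} [Fintype ι] [NormedAddCommGroup H] [InnerProductSpace ℂ H]
    [FiniteDimensional ℂ H] (e : OrthonormalBasis ι ℂ H) (K : Submodule ℂ H)
    (hK : Copyable (⇑e) K) : Copyable (⇑e) Kᗮ := by
  rw [copyable_iff] at hK ⊢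
  rw [K.orthogonal_orthogonal]
  exact fun j => (hK j).symm
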